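/- arXiv:0801.3605 — 2 statements merged into one kernel-verified Lean document; each statement's English description precedes it below -/
import Mathlib

section
/- Let f : ℂ → ℂ be a nonconstant entire function and let G ⊂ ℂ be a bounded domain (a nonempty bounded connected open set). Then f(G̃) ⊂ (f(G))~, i.e. the image under f of the union of G with the bounded components of ℂ \ G is contained in the union of f(G) with the bounded components of ℂ \ f(G). -/
open Set Filter Topology Metric Bornology Function
open scoped OnePoint

noncomputable section

namespace EscapingSmallGrowth

/-- The spherical (chordal) metric on the Riemann sphere `ℂ ∪ {∞}`. -/
def sphDist : OnePoint ℂ → OnePoint ℂ → ℝ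
  | (z : ℂ), (w : ℂ) =>
      2 * ‖z - w‖ /
        (Real.sqrt (1 + ‖z‖ ^ 2) * Real.sqrt (1 + ‖w‖ ^ 2))
  | (z : ℂ), ∞ => 2 / Real.sqrt (1 + ‖z‖ ^ 2)
  | ∞, (w : ℂ) => 2 / Real.sqrt (1 + ‖w‖ ^ 2)
  | ∞, ∞ => 0

/-- Locally uniform convergence on `U`, with respect to the spherical metric, of a
sequence of entire functions to a limit taking values in the Riemann sphere. -/
def SphLocUnifOn (U : Set ℂ) (g : ℕ → ℂ → ℂ) (φ : ℂ → OnePoint ℂ) : Prop :=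
  ∀ z ∈ U, ∃ V ∈ 𝓝 z,
    ∀ ε > (0:ℝ), ∃ N : ℕ, ∀ k ≥ N, ∀ w ∈ V ∩ U, sphDist ((g k w : ℂ) : OnePoint ℂ) (φ w) < ε

/-- The Fatou set: points with an open neighbourhood on which the family of iterates is
normal, i.e. every sequence of iterates has a subsequence converging locally uniformly
with respect to the spherical metric on the Riemann sphere. -/
def FatouSet (f : ℂ → ℂ) : Set ℂ :=
  {z | ∃ U, IsOpen U ∧ z ∈ U ∧
    ∀ n : ℕ → ℕ, ∃ k : ℕ → ℕ, StrictMono k ∧ ∃ φ : ℂ → OnePoint ℂ,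
      SphLocUnifOn U (fun j => f^[n (k j)]) φ}

/-- The Julia set. -/
def JuliaSet (f : ℂ → ℂ) : Set ℂ := (FatouSet f)ᶜ

/-- The escaping set `I(f)`. -/
def escapingSet (f : ℂ → ℂ) : Set ℂ :=
  {z | Tendsto (fun n : ℕ => ‖f^[n] z‖) atTop atTop}

/-- A transcendental entire function: holomorphic on all of `ℂ` and not a polynomial. -/
def TranscendentalEntire (f : ℂ → ℂ) : Prop :=
  Differentiable ℂ f ∧ ¬ ∃ p : Polynomial ℂ, ∀ z, f z = p.eval z

/-- `S̃`: the union of `S` with the bounded connected components of its complement. -/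
def fill (S : Set ℂ) : Set ℂ :=
  S ∪ {z | z ∉ S ∧ IsBounded (connectedComponentIn Sᶜ z)}

/-- The set `B_D(f)`. -/
def BD (f : ℂ → ℂ) (D : Set ℂ) : Set ℂ :=
  {z | ∀ n : ℕ, f^[n] z ∉ fill (f^[n] '' D)}

/-- The set `B(f)` (defined using a disc `D` meeting `J(f)`; it is independent of `D`). -/
def Bset (f : ℂ → ℂ) (D : Set ℂ) : Set ℂ :=
  {z | ∃ L : ℕ, ∀ n : ℕ, f^[n + L] z ∉ fill (f^[n] '' D)}

/-- `D` is an open disc. -/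
def IsOpenDisc (D : Set ℂ) : Prop := ∃ c : ℂ, ∃ r : ℝ, 0 < r ∧ D = Metric.ball c r

/-- `U` is a bounded domain: a nonempty bounded connected open subset of `ℂ`. -/
def IsBoundedDomain (U : Set ℂ) : Prop := IsOpen U ∧ IsConnected U ∧ IsBounded U

/-- The maximum modulus `M(r,f)`. -/
def maxMod (f : ℂ → ℂ) (r : ℝ) : ℝ :=
  sSup ((fun z => ‖f z‖) '' Metric.sphere (0:ℂ) r)

/-- The minimum modulus `m(r,f)`. -/
def minMod (f : ℂ → ℂ) (r : ℝ) : ℝ :=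
  sInf ((fun z => ‖f z‖) '' Metric.sphere (0:ℂ) r)

/-- A Jordan curve: the image of a continuous injective map from the circle to `ℂ`. -/
def IsJordanCurve (γ : Set ℂ) : Prop :=
  ∃ φ : Metric.sphere (0:ℂ) 1 → ℂ, Continuous φ ∧ Function.Injective φ ∧ γ = Set.range φ

/-- `γ` surrounds `S` if `S` is contained in a bounded connected component of `γᶜ`. -/
def Surrounds (γ S : Set ℂ) : Prop :=
  ∃ z, z ∉ γ ∧ IsBounded (connectedComponentIn γᶜ z) ∧ S ⊆ connectedComponentIn γᶜ z

/-- The inside of a curve: the union of the bounded components of its complement. -/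
def insideOf (γ : Set ℂ) : Set ℂ :=
  {z | z ∉ γ ∧ IsBounded (connectedComponentIn γᶜ z)}


/-! The component `K` of `Gᶜ` through `w` is compact. By the Šura-Bura theorem, applied in the
compact set `Y = Gᶜ ∩ closure U` for a relatively compact open `U ⊇ K`, some relatively clopen
`A ⊆ Y` with `w ∈ A` lies in `U`. A relatively compact open `V` with `A ⊆ V` and
`closure V ⊆ U \ (Y \ A)` then has `frontier V ⊆ G`. For an open map `f`,
`frontier (f '' V) ⊆ f '' frontier V ⊆ f '' G`, so the component of `(f '' G)ᶜ` through
`f w ∉ f '' G` cannot leave the bounded set `f '' V`. -/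

end EscapingSmallGrowth

section Topology

variable {X : Type*} [TopologicalSpace X]

theorem IsPreconnected.subset_of_disjoint_frontier {s O : Set X} (hs : IsPreconnected s)
    (hO : IsOpen O) (hsO : (s ∩ O).Nonempty) (hdisj : Disjoint s (frontier O)) : s ⊆ O := by
  refine hs.subset_left_of_subset_union hO isClosed_closure.isOpen_compl
    (disjoint_compl_right.mono_left subset_closure) (fun x hx => ?_) hsO
  by_cases hxc : x ∈ closure O
  · by_contra hxO
    exact hdisj.ne_of_mem hx (hO.frontier_eq ▸ ⟨hxc, fun h => hxO (Or.inl h)⟩) rfl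
  · exact Or.inr hxc

theorem frontier_image_subset_image_frontier {Y : Type*} [TopologicalSpace Y] [T2Space Y]
    {f : X → Y} (hf : Continuous f) (hfo : IsOpenMap f) {V : Set X} (hV : IsOpen V)
    (hVc : IsCompact (closure V)) : frontier (f '' V) ⊆ f '' frontier V := by
  rw [(hfo V hV).frontier_eq, hV.frontier_eq, ← image_closure_of_isCompact hVc hf.continuousOn]
  rintro _ ⟨⟨x, hx, rfl⟩, hxV⟩
  exact ⟨x, ⟨hx, fun h => hxV (mem_image_of_mem f h)⟩, rfl⟩

/-- **Šura-Bura**: the component is the intersection of its clopen neighbourhoods, and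
compactness of `Uᶜ` lets finitely many of them suffice. -/
theorem exists_isClopen_of_connectedComponent_subset [T2Space X] [CompactSpace X] {x : X}
    {U : Set X} (hU : IsOpen U) (hxU : connectedComponent x ⊆ U) :
    ∃ A : Set X, IsClopen A ∧ x ∈ A ∧ A ⊆ U := by
  have hempty : Uᶜ ∩ ⋂ s : {s : Set X // IsClopen s ∧ x ∈ s}, (s : Set X) = ∅ := by
    rw [← connectedComponent_eq_iInter_isClopen, ← disjoint_iff_inter_eq_empty]
    exact disjoint_compl_left_iff_subset.mpr hxU
  obtain ⟨t, ht⟩ := hU.isClosed_compl.isCompact.elim_finite_subfamily_closed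
    (fun s : {s : Set X // IsClopen s ∧ x ∈ s} => (s : Set X)) (fun s => s.2.1.1) hempty
  refine ⟨⋂ s ∈ t, (s : Set X), isClopen_biInter_finset fun s _ => s.2.1,
    mem_iInter₂.mpr fun s _ => s.2.2, ?_⟩
  rw [← disjoint_compl_left_iff_subset, disjoint_iff_inter_eq_empty]
  exact ht

theorem IsCompact.exists_isCompact_of_connectedComponentIn_subset [T2Space X] {Y : Set X}
    (hY : IsCompact Y) {x : X} (hx : x ∈ Y) {U : Set X} (hU : IsOpen U)
    (hxU : connectedComponentIn Y x ⊆ U) :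
    ∃ A ⊆ Y, x ∈ A ∧ A ⊆ U ∧ IsCompact A ∧ IsCompact (Y \ A) := by
  have := isCompact_iff_compactSpace.mp hY
  rw [connectedComponentIn_eq_image hx, image_subset_iff] at hxU
  obtain ⟨A, hA, hxA, hAU⟩ :=
    exists_isClopen_of_connectedComponent_subset (hU.preimage continuous_subtype_val) hxU
  refine ⟨(↑) '' A, Subtype.coe_image_subset Y A, ⟨⟨x, hx⟩, hxA, rfl⟩,
    image_subset_iff.mpr hAU, hA.isClosed.isCompact.image continuous_subtype_val, ?_⟩
  have hdiff : Y \ (↑) '' A = (↑) '' Aᶜ := by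
    rw [image_compl_eq_range_sdiff_image Subtype.val_injective, Subtype.range_coe]
  exact hdiff ▸ hA.compl.isClosed.isCompact.image continuous_subtype_val

theorem exists_isOpen_mem_frontier_subset [T2Space X] [LocallyCompactSpace X] {G : Set X}
    (hG : IsOpen G) {w : X} (hw : w ∉ G) (hK : IsCompact (closure (connectedComponentIn Gᶜ w))) :
    ∃ V, IsOpen V ∧ w ∈ V ∧ IsCompact (closure V) ∧ frontier V ⊆ G := by
  obtain ⟨U, hU, hKU, -, hUc⟩ := exists_open_between_and_isCompact_closure hK isOpen_univ
    (subset_univ _)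
  set Y := Gᶜ ∩ closure U
  have hwY : w ∈ Y := ⟨hw, subset_closure (hKU (subset_closure (mem_connectedComponentIn hw)))⟩
  have hYK : connectedComponentIn Y w ⊆ U :=
    (connectedComponentIn_mono _ inter_subset_left).trans (subset_closure.trans hKU)
  have hY : IsCompact Y := hUc.inter_left hG.isClosed_compl
  obtain ⟨A, -, hwA, hAU, hA, hYA⟩ :=
    hY.exists_isCompact_of_connectedComponentIn_subset hwY hU hYK
  obtain ⟨V, hV, hAV, hVU, hVc⟩ :=
    exists_open_between_and_isCompact_closure hA (hU.inter hYA.isClosed.isOpen_compl)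
      (subset_inter hAU fun a ha h => h.2 ha)
  refine ⟨V, hV, hAV hwA, hVc, fun p hp => by_contra fun hpG => ?_⟩
  rw [hV.frontier_eq] at hp
  have hpY : p ∈ Y := ⟨hpG, subset_closure (hVU hp.1).1⟩
  exact (hVU hp.1).2 ⟨hpY, fun hpA => hp.2 (hAV hpA)⟩

end Topology

namespace EscapingSmallGrowth

theorem image_fill_subset_fill_image_of_isOpenMap {f : ℂ → ℂ} (hf : Continuous f)
    (hfo : IsOpenMap f) {G : Set ℂ} (hG : IsOpen G) : f '' fill G ⊆ fill (f '' G) := by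
  rintro _ ⟨w, hw | ⟨hwG, hK⟩, rfl⟩
  · exact Or.inl (mem_image_of_mem f hw)
  by_cases hfw : f w ∈ f '' G
  · exact Or.inl hfw
  obtain ⟨V, hV, hwV, hVc, hVG⟩ := exists_isOpen_mem_frontier_subset hG hwG hK.isCompact_closure
  have hfront : frontier (f '' V) ⊆ f '' G :=
    (frontier_image_subset_image_frontier hf hfo hV hVc).trans (image_mono hVG)
  have hcomp : connectedComponentIn (f '' G)ᶜ (f w) ⊆ f '' V :=
    isPreconnected_connectedComponentIn.subset_of_disjoint_frontier (hfo V hV)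
      ⟨f w, mem_connectedComponentIn hfw, mem_image_of_mem f hwV⟩
      (disjoint_compl_left.mono (connectedComponentIn_subset _ _) hfront)
  exact Or.inr ⟨hfw, (hVc.image hf).isBounded.subset (hcomp.trans (image_mono subset_closure))⟩

/-- For a nonconstant entire function `f` and a bounded domain `G`,
`f(G̃) ⊆ (f(G))~`. -/
theorem image_fill_subset_fill_image
    (f : ℂ → ℂ) (hf : Differentiable ℂ f) (hnc : ¬ ∃ c : ℂ, f = fun _ => c)
    (G : Set ℂ) (hG : IsBoundedDomain G) :
    f '' fill G ⊆ fill (f '' G) := by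
  have hfo : IsOpenMap f :=
    ((Complex.analyticOnNhd_univ_iff_differentiable.mpr hf).is_constant_or_isOpenMap).resolve_left
      fun ⟨c, hc⟩ => hnc ⟨c, funext hc⟩
  exact image_fill_subset_fill_image_of_isOpenMap hf.continuous hfo hG.1

end EscapingSmallGrowth
end
end

section
/- Let f be a transcendental entire function, let D be an open disc with D ∩ J(f) ≠ ∅, and for n ∈ ℕ let V_n denote the connected component of f^{-n}((f^n(D))~) that contains D. Then V_n ⊂ V_{n+1} for every n ∈ ℕ. -/
open Set Filter Topology Metric Bornology Function
open scoped OnePoint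

noncomputable section

namespace EscapingSmallGrowth

/-!
`f` maps `S̃` into `(f S)~` for `S = f^n(D)`, which gives `f^{-n}(S̃) ⊆ f^{-(n+1)}((f S)~)` and hence
`V_n ⊆ V_{n+1}`. A point `w ∈ S̃ \ S` lies in a bounded component of the closed set `Sᶜ`; splitting
the compact set `Sᶜ ∩ closedBall w R` along a clopen set containing that component and separating
the two pieces gives a bounded open `U ∋ w` with `∂U ⊆ S`. Since `f` is open, `∂(f U) ⊆ f(∂U) ⊆ f S`,
so every component of `(f S)ᶜ` meeting `f U` stays inside the bounded set `f U`.
-/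

theorem _root_.IsOpenMap.iterate {X : Type*} [TopologicalSpace X] {g : X → X} (hg : IsOpenMap g) :
    ∀ n : ℕ, IsOpenMap g^[n]
  | 0 => IsOpenMap.id
  | n + 1 => (hg.iterate n).comp hg

theorem TranscendentalEntire.isOpenMap {f : ℂ → ℂ} (hf : TranscendentalEntire f) :
    IsOpenMap f := by
  refine (Complex.analyticOnNhd_univ_iff_differentiable.mpr hf.1).is_constant_or_isOpenMap
    |>.resolve_left ?_
  rintro ⟨w, hw⟩
  exact hf.2 ⟨Polynomial.C w, fun z => by simp [hw z]⟩

theorem exists_isClopen_mem_subset_of_connectedComponent_subset {X : Type*} [TopologicalSpace X]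
    [CompactSpace X] [T2Space X] {x : X} {U : Set X} (hU : IsOpen U)
    (h : connectedComponent x ⊆ U) : ∃ V, IsClopen V ∧ x ∈ V ∧ V ⊆ U := by
  rw [connectedComponent_eq_iInter_isClopen, ← disjoint_compl_right_iff_subset,
    disjoint_iff_inter_eq_empty, inter_comm] at h
  obtain ⟨t, ht⟩ := hU.isClosed_compl.isCompact.elim_finite_subfamily_closed _
    (fun s : {s : Set X // IsClopen s ∧ x ∈ s} => s.2.1.1) h
  refine ⟨⋂ s ∈ t, (s : Set X), isClopen_biInter_finset fun s _ => s.2.1,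
    mem_iInter₂.mpr fun s _ => s.2.2, fun y hy => ?_⟩
  by_contra hyU
  exact (eq_empty_iff_forall_notMem.mp ht) y ⟨hyU, hy⟩

section ProperSpace

variable {E : Type*} [MetricSpace E] [ProperSpace E] {F : Set E} {x : E}

theorem exists_isCompact_isClosed_split_of_isBounded_connectedComponentIn (hF : IsClosed F)
    (hx : x ∈ F) (hK : IsBounded (connectedComponentIn F x)) :
    ∃ P Q : Set E, IsCompact P ∧ IsClosed Q ∧ IsBounded Qᶜ ∧ x ∈ P ∧ Disjoint P Q ∧
      F ⊆ P ∪ Q := by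
  obtain ⟨R, hKR⟩ := hK.subset_ball x
  set Y := F ∩ closedBall x R
  have hR : 0 < R := nonempty_ball.mp ⟨x, hKR (mem_connectedComponentIn hx)⟩
  have hxY : x ∈ Y := ⟨hx, mem_closedBall_self hR.le⟩
  have hYc : IsCompact Y := (isCompact_closedBall x R).inter_left hF
  have : CompactSpace Y := isCompact_iff_compactSpace.mp hYc
  have hcomp : connectedComponent (⟨x, hxY⟩ : Y) ⊆ (↑) ⁻¹' ball x R := by
    rw [← image_subset_iff, ← connectedComponentIn_eq_image hxY]
    exact (connectedComponentIn_mono x inter_subset_left).trans hKR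
  obtain ⟨W, hW, hxW, hWR⟩ := exists_isClopen_mem_subset_of_connectedComponent_subset
    (isOpen_ball.preimage continuous_subtype_val) hcomp
  have hval : IsClosedMap ((↑) : Y → E) := hYc.isClosed.isClosedMap_subtype_val
  refine ⟨(↑) '' W, (↑) '' Wᶜ ∪ (ball x R)ᶜ, hW.1.isCompact.image continuous_subtype_val,
    (hval _ hW.compl.1).union isOpen_ball.isClosed_compl, ?_, ⟨⟨x, hxY⟩, hxW, rfl⟩, ?_, ?_⟩
  · exact isBounded_ball.subset fun z hz => by_contra fun h => hz (Or.inr h)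
  · exact disjoint_union_right.mpr ⟨(disjoint_image_iff Subtype.val_injective).mpr
      disjoint_compl_right, disjoint_compl_right_iff_subset.mpr (image_subset_iff.mpr hWR)⟩
  · intro z hz
    by_cases hzR : z ∈ ball x R
    · by_cases hzW : (⟨z, hz, ball_subset_closedBall hzR⟩ : Y) ∈ W
      · exact Or.inl ⟨_, hzW, rfl⟩
      · exact Or.inr (Or.inl ⟨_, hzW, rfl⟩)
    · exact Or.inr (Or.inr hzR)

theorem exists_isOpen_isBounded_mem_disjoint_frontier (hF : IsClosed F) (hx : x ∈ F)
    (hK : IsBounded (connectedComponentIn F x)) :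
    ∃ U : Set E, IsOpen U ∧ IsBounded U ∧ x ∈ U ∧ Disjoint (frontier U) F := by
  obtain ⟨P, Q, hP, hQ, hQb, hxP, hPQ, hFPQ⟩ :=
    exists_isCompact_isClosed_split_of_isBounded_connectedComponentIn hF hx hK
  obtain ⟨U, W, hU, hW, hPU, hQW, hUW⟩ := normal_separation hP.isClosed hQ hPQ
  have hclU : Disjoint (closure U) W := hUW.closure_left hW
  refine ⟨U, hU, hQb.subset fun z hz hzQ => hUW.ne_of_mem hz (hQW hzQ) rfl, hPU hxP, ?_⟩
  rw [hU.frontier_eq, disjoint_left]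
  rintro y ⟨hycl, hyU⟩ hyF
  rcases hFPQ hyF with hyP | hyQ
  · exact hyU (hPU hyP)
  · exact hclU.ne_of_mem hycl (hQW hyQ) rfl

end ProperSpace

theorem _root_.IsOpenMap.frontier_image_subset {X Y : Type*} [TopologicalSpace X]
    [TopologicalSpace Y] [T2Space Y] {g : X → Y} (hgo : IsOpenMap g) (hgc : Continuous g)
    {U : Set X} (hU : IsOpen U) (hUc : IsCompact (closure U)) : frontier (g '' U) ⊆ g '' frontier U := by
  rw [(hgo U hU).frontier_eq, hU.frontier_eq]
  rintro y ⟨hycl, hyU⟩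
  obtain ⟨z, hz, rfl⟩ := closure_minimal (image_mono subset_closure) (hUc.image hgc).isClosed hycl
  exact ⟨z, ⟨hz, fun h => hyU (mem_image_of_mem g h)⟩, rfl⟩

theorem subset_fill_of_frontier_subset {U T : Set ℂ} (hU : IsOpen U) (hUb : IsBounded U)
    (hUT : frontier U ⊆ T) : U ⊆ fill T := by
  intro w hw
  by_cases hwT : w ∈ T
  · exact Or.inl hwT
  refine Or.inr ⟨hwT, hUb.subset ?_⟩
  refine isPreconnected_connectedComponentIn.subset_of_closure_inter_subset hU
    ⟨w, mem_connectedComponentIn hwT, hw⟩ fun z ⟨hzcl, hzC⟩ => by_contra fun hzU => ?_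
  exact connectedComponentIn_subset _ _ hzC (hUT (hU.frontier_eq ▸ ⟨hzcl, hzU⟩))

theorem image_fill_subset_fill {g : ℂ → ℂ} (hgc : Continuous g) (hgo : IsOpenMap g) {S : Set ℂ}
    (hS : IsOpen S) : g '' fill S ⊆ fill (g '' S) := by
  rintro _ ⟨w, hwS | ⟨hwS, hK⟩, rfl⟩
  · exact Or.inl (mem_image_of_mem g hwS)
  obtain ⟨U, hU, hUb, hwU, hUS⟩ :=
    exists_isOpen_isBounded_mem_disjoint_frontier hS.isClosed_compl hwS hK
  have hUc : IsCompact (closure U) := hUb.isCompact_closure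
  refine subset_fill_of_frontier_subset (hgo U hU)
    ((hUc.image hgc).isBounded.subset (image_mono subset_closure)) ?_ (mem_image_of_mem g hwU)
  exact (hgo.frontier_image_subset hgc hU hUc).trans
    (image_mono (disjoint_compl_right_iff_subset.mp hUS))

theorem component_preimage_mono_general
    (f : ℂ → ℂ) (hf : TranscendentalEntire f) (c₀ : ℂ) (r₀ : ℝ)
    (D : Set ℂ) (hD : D = Metric.ball c₀ r₀)
    (V : ℕ → Set ℂ)
    (hV : ∀ n : ℕ, V n = connectedComponentIn (f^[n] ⁻¹' fill (f^[n] '' D)) c₀) :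
    ∀ n : ℕ, V n ⊆ V (n + 1) := by
  intro n
  have hfo := hf.isOpenMap
  have hSo : IsOpen (f^[n] '' D) := hfo.iterate n D (hD ▸ isOpen_ball)
  rw [hV n, hV (n + 1)]
  refine connectedComponentIn_mono c₀ fun z hz => ?_
  rw [mem_preimage, iterate_succ_apply', iterate_succ', image_comp]
  exact image_fill_subset_fill hf.1.continuous hfo hSo (mem_image_of_mem f hz)

/-- The components `V_n` of `f^{-n}((f^n(D))~)` containing `D`
satisfy `V_n ⊆ V_{n+1}`. -/
theorem component_preimage_mono
    (f : ℂ → ℂ) (hf : TranscendentalEntire f) (c₀ : ℂ) (r₀ : ℝ) (hr₀ : 0 < r₀)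
    (D : Set ℂ) (hD : D = Metric.ball c₀ r₀)
    (hDJ : (D ∩ JuliaSet f).Nonempty)
    (V : ℕ → Set ℂ)
    (hV : ∀ n : ℕ, V n = connectedComponentIn (f^[n] ⁻¹' fill (f^[n] '' D)) c₀) :
    ∀ n : ℕ, V n ⊆ V (n + 1) :=
  component_preimage_mono_general f hf c₀ r₀ D hD V hV

end EscapingSmallGrowth
end
end
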